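/- arXiv:2508.16162 — 2 statements merged into one kernel-verified Lean document; each statement's English description precedes it below -/
import Mathlib

section
/- Fix an integer g ≥ 2 and a real t > 0, and set q = e^{−t/2}. Then lim_{N→∞} Z_{U(N)}(g,t) = θ(q), where Z_{U(N)}(g,t) = Σ_λ e^{−(t/2)c₂(λ)} d_λ^{2−2g}, the sum over all nonincreasing tuples λ ∈ ℤ^N, with d_λ = ∏_{1≤i<j≤N} (λ_i − λ_j + j − i)/(j − i), c₂(λ) = (1/N)(Σ_i λ_i² + Σ_{i<j} (λ_i − λ_j)), and θ(q) = Σ_{n∈ℤ} q^{n²}. -/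
/-- The Weyl dimension of a nonincreasing tuple `λ ∈ ℤ^N`:
`d_λ = ∏_{1 ≤ i < j ≤ N} (λ_i − λ_j + j − i)/(j − i)`. -/
def weylDim (N : ℕ) (l : Fin N → ℤ) : ℚ :=
  ∏ p ∈ Finset.univ.filter (fun p : Fin N × Fin N => p.1 < p.2),
    (((l p.1 : ℚ) - (l p.2 : ℚ) + ((p.2 : ℕ) : ℚ) - ((p.1 : ℕ) : ℚ)) /
      (((p.2 : ℕ) : ℚ) - ((p.1 : ℕ) : ℚ)))

/-- The Casimir number of a nonincreasing tuple `λ ∈ ℤ^N`: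
`c₂(λ) = (1/N)(Σ_i λ_i² + Σ_{i<j} (λ_i − λ_j))`. -/
def casimir (N : ℕ) (l : Fin N → ℤ) : ℚ :=
  ((∑ i : Fin N, ((l i : ℚ)) ^ 2) +
    ∑ p ∈ Finset.univ.filter (fun p : Fin N × Fin N => p.1 < p.2),
      ((l p.1 : ℚ) - (l p.2 : ℚ))) / (N : ℚ)

/-- The Jacobi theta function `θ(q) = Σ_{n ∈ ℤ} q^{n²}`, with values in `[0,∞]`. -/
noncomputable def thetaE (q : ℝ) : ENNReal :=
  ∑' n : ℤ, ENNReal.ofReal (q ^ (n.natAbs ^ 2))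

/-- Migdal's formula: the `U(N)` Yang–Mills partition function on a genus-`g` surface of area
`t`, `Z_{U(N)}(g,t) = Σ_λ q^{c₂(λ)} d_λ^{2−2g}` with `q = e^{−t/2}`, summing over all
nonincreasing tuples `λ ∈ ℤ^N`, with values in `[0,∞]`. -/
noncomputable def ZUN (N : ℕ) (g : ℕ) (t : ℝ) : ENNReal :=
  ∑' l : {l : Fin N → ℤ // ∀ i j : Fin N, i ≤ j → l j ≤ l i},
    ENNReal.ofReal (Real.exp (-(t / 2)) ^ ((casimir N l.1 : ℝ)) *
      (weylDim N l.1 : ℝ) ^ (2 - 2 * (g : ℤ)))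

/-!
Split the sum over `λ` into the constant tuples `(m, …, m)`, for which `d_λ = 1` and
`c₂(λ) = m²`, so that they contribute exactly `θ(q)`, and the rest. A nonconstant `λ` has a
drop `λ_{r+1} < λ_r`; the Weyl factors of the pairs `(i, r + 1)`, `i ≤ r`, and `(r, j)`, `j > r`,
telescope to `d_λ ≥ (N + 2) / 2`, hence `d_λ ^ (2 - 2g) ≤ 4 / N²` once `g ≥ 2`.

It remains to bound `Σ_λ q^{c₂(λ)}` uniformly in `N`. Write `λ` through its last entry `m` and
its gaps `G_r = λ_r - λ_{r+1} ≥ 0`. Cauchy–Schwarz on `Σ λ_i²` and counting the `(r + 1)(N - 1 - r)`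
pairs that straddle the gap `r` give `c₂(λ) ≥ (m + σ)² + Σ_r min(r + 1, N - 1 - r) G_r / 2`, where
`σ` depends on `G` only. The sum over `m ∈ ℤ` of `q^{(m + σ)²}` is bounded independently of `σ`,
and the sum over `G` factors into geometric series whose product is at most
`exp (2√q / (1 - √q)²)`.
-/

open Finset Filter Topology
open scoped ENNReal

def strictPairs (N : ℕ) : Finset (Fin N × Fin N) := univ.filter fun p => p.1 < p.2

def weylFactor {N : ℕ} (l : Fin N → ℤ) (p : Fin N × Fin N) : ℚ :=
  ((l p.1 : ℚ) - l p.2 + (p.2 : ℕ) - (p.1 : ℕ)) / ((p.2 : ℕ) - (p.1 : ℕ))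

abbrev NonincTuple (N : ℕ) := {l : Fin N → ℤ // ∀ i j : Fin N, i ≤ j → l j ≤ l i}

lemma NonincTuple.antitone {N : ℕ} (x : NonincTuple N) : Antitone x.1 := fun _ _ h => x.2 _ _ h

lemma weylDim_eq_prod (N : ℕ) (l : Fin N → ℤ) :
    weylDim N l = ∏ p ∈ strictPairs N, weylFactor l p := rfl

lemma mem_strictPairs {N : ℕ} {p : Fin N × Fin N} : p ∈ strictPairs N ↔ p.1 < p.2 := by
  simp [strictPairs]

section WeylDim

variable {N : ℕ} {l : Fin N → ℤ}

lemma one_le_weylFactor (hl : Antitone l) {p : Fin N × Fin N} (hp : p.1 < p.2) :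
    1 ≤ weylFactor l p := by
  have hlp : (l p.2 : ℚ) ≤ l p.1 := by exact_mod_cast hl hp.le
  have hd : ((p.1 : ℕ) : ℚ) < (p.2 : ℕ) := by exact_mod_cast hp
  rw [weylFactor, le_div_iff₀ (by linarith)]
  linarith

lemma add_two_div_add_one_le_weylFactor {p : Fin N × Fin N} {k : ℕ} (hk : (p.2 : ℕ) = p.1 + k + 1)
    (hlp : l p.2 < l p.1) : ((k : ℚ) + 2) / (k + 1) ≤ weylFactor l p := by
  have hlp' : (l p.2 : ℚ) + 1 ≤ l p.1 := by exact_mod_cast hlp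
  have hd : ((p.2 : ℕ) : ℚ) - (p.1 : ℕ) = k + 1 := by rw [hk]; push_cast; ring
  rw [weylFactor, add_sub_assoc, hd]
  gcongr ?_ / _
  linarith

lemma prod_le_weylDim (hl : Antitone l) {s : Finset (Fin N × Fin N)} (hs : s ⊆ strictPairs N) :
    ∏ p ∈ s, weylFactor l p ≤ weylDim N l :=
  weylDim_eq_prod N l ▸ prod_le_prod_of_subset_of_one_le hs
    (fun _ hp => zero_le_one.trans (one_le_weylFactor hl (mem_strictPairs.1 (hs hp))))
    (fun _ hp _ => one_le_weylFactor hl (mem_strictPairs.1 hp))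

lemma one_le_weylDim (hl : Antitone l) : 1 ≤ weylDim N l := by
  simpa using prod_le_weylDim hl (empty_subset _)

lemma prod_range_add_two_div_add_one (m : ℕ) :
    ∏ k ∈ range m, ((k : ℚ) + 2) / (k + 1) = m + 1 := by
  induction m with
  | zero => simp
  | succ m ih =>
    rw [prod_range_succ, ih]
    field_simp
    push_cast
    ring

/-- The factors along the chain are at least `(k + 2) / (k + 1)`, and these telescope. -/
lemma add_one_le_weylDim (hl : Antitone l) {m : ℕ} (φ : Fin m → Fin N × Fin N)
    (hφ : ∀ k, ((φ k).2 : ℕ) = (φ k).1 + k + 1) (hdrop : ∀ k, l (φ k).2 < l (φ k).1) :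
    (m : ℚ) + 1 ≤ weylDim N l := by
  have hinj : Function.Injective φ := fun a b hab => by
    have ha := hφ a
    have hb := hφ b
    rw [hab] at ha
    exact Fin.ext (by omega)
  calc (m : ℚ) + 1 = ∏ k : Fin m, ((k : ℚ) + 2) / (k + 1) :=
        (prod_range_add_two_div_add_one m ▸ Fin.prod_univ_eq_prod_range _ m).symm
    _ ≤ ∏ k : Fin m, weylFactor l (φ k) :=
        prod_le_prod (fun _ _ => by positivity) fun k _ =>
          add_two_div_add_one_le_weylFactor (hφ k) (hdrop k)
    _ = ∏ p ∈ univ.image φ, weylFactor l p := (prod_image fun a _ b _ h => hinj h).symm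
    _ ≤ weylDim N l := prod_le_weylDim hl fun p hp => by
        obtain ⟨k, -, rfl⟩ := mem_image.1 hp
        exact mem_strictPairs.2 (Fin.lt_def.2 (by have := hφ k; omega))

/-- The drop is straddled by the chains `(r - k, r + 1)` and `(r, r + 1 + k)`. -/
lemma weylDim_ge_of_drop {n : ℕ} {l : Fin (n + 1) → ℤ} (hl : Antitone l) (r : Fin n)
    (hr : l r.succ < l r.castSucc) : ((n : ℚ) + 3) / 2 ≤ weylDim (n + 1) l := by
  have hleft := add_one_le_weylDim hl (m := r + 1)
    (fun k => (⟨r - k, by omega⟩, r.succ)) (fun k => by simp only [Fin.val_succ]; omega)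
    (fun k => hr.trans_le (hl (Fin.le_def.2 (by simp))))
  have hright := add_one_le_weylDim hl (m := n - r)
    (fun k => (r.castSucc, ⟨r + 1 + k, by omega⟩)) (fun k => by simp only [Fin.val_castSucc]; omega)
    (fun k => (hl (Fin.le_def.2 (by simp))).trans_lt hr)
  have hnr : ((n - r : ℕ) : ℚ) = n - r := Nat.cast_sub r.isLt.le
  push_cast at hleft
  rw [hnr] at hright
  linarith

end WeylDim

lemma weylDim_zpow_le {n g : ℕ} {l : Fin (n + 1) → ℤ} (hg : 2 ≤ g) (hl : Antitone l)
    (r : Fin n) (hr : l r.succ < l r.castSucc) :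
    (weylDim (n + 1) l : ℝ) ^ (2 - 2 * (g : ℤ)) ≤ 4 / ((n : ℝ) + 1) ^ 2 := by
  have hd1 : (1 : ℝ) ≤ (weylDim (n + 1) l : ℝ) := by exact_mod_cast one_le_weylDim hl
  have hdn : ((n : ℝ) + 1) / 2 ≤ (weylDim (n + 1) l : ℝ) := by
    have h := (Rat.cast_le (K := ℝ)).2 (weylDim_ge_of_drop hl r hr)
    push_cast at h
    linarith
  calc (weylDim (n + 1) l : ℝ) ^ (2 - 2 * (g : ℤ)) ≤ (weylDim (n + 1) l : ℝ) ^ (-2 : ℤ) :=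
        zpow_le_zpow_right₀ hd1 (by omega)
    _ = ((weylDim (n + 1) l : ℝ) ^ 2)⁻¹ := by rw [zpow_neg, zpow_two, sq]
    _ ≤ ((((n : ℝ) + 1) / 2) ^ 2)⁻¹ := by gcongr
    _ = 4 / ((n : ℝ) + 1) ^ 2 := by field_simp; norm_num

section Gaps

variable {n : ℕ}

def ofGaps (G : Fin n → ℕ) (m : ℤ) (i : Fin (n + 1)) : ℤ :=
  m + ∑ r, if i ≤ r.castSucc then (G r : ℤ) else 0

def gaps (l : Fin (n + 1) → ℤ) (r : Fin n) : ℕ := (l r.castSucc - l r.succ).toNat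

lemma antitone_ofGaps (G : Fin n → ℕ) (m : ℤ) : Antitone (ofGaps G m) := by
  intro i j hij
  unfold ofGaps
  gcongr with r
  split_ifs with hj hi <;> first | exact le_rfl | positivity | exact absurd (hij.trans hj) hi

lemma ofGaps_gaps {l : Fin (n + 1) → ℤ} (hl : Antitone l) :
    ofGaps (gaps l) (l (Fin.last n)) = l := by
  funext i
  induction i using Fin.reverseInduction with
  | last => simp [ofGaps]
  | cast i ih =>
    have hgap : (gaps l i : ℤ) = l i.castSucc - l i.succ :=
      Int.toNat_of_nonneg (sub_nonneg.2 (hl (Fin.castSucc_le_succ i)))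
    have hsplit : ∀ r : Fin n, (if i.castSucc ≤ r.castSucc then (gaps l r : ℤ) else 0) =
        (if i = r then (gaps l r : ℤ) else 0) +
          if i.succ ≤ r.castSucc then (gaps l r : ℤ) else 0 := by
      intro r
      simp only [Fin.castSucc_le_castSucc_iff, Fin.succ_le_castSucc_iff]
      rcases lt_trichotomy i r with h | rfl | h
      · simp [h.le, h.ne, h]
      · simp
      · simp [h.not_ge, h.ne', h.not_gt]
    simp only [ofGaps] at ih ⊢
    rw [sum_congr rfl fun r _ => hsplit r, sum_add_distrib, sum_ite_eq]
    simp only [mem_univ, if_true]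
    linarith

def gapMean (G : Fin n → ℕ) : ℚ := (∑ r : Fin n, ((r : ℚ) + 1) * G r) / (n + 1)

def gapWeight (n : ℕ) (r : Fin n) : ℕ := min (r + 1) (n - r)

lemma sum_ofGaps (G : Fin n → ℕ) (m : ℤ) :
    ∑ i, (ofGaps G m i : ℚ) = (n + 1) * m + ∑ r : Fin n, ((r : ℚ) + 1) * G r := by
  simp only [ofGaps]
  push_cast
  rw [sum_add_distrib, sum_comm]
  simp [← sum_filter, filter_ge_eq_Iic]

lemma sum_strictPairs_ofGaps (G : Fin n → ℕ) (m : ℤ) :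
    ∑ p ∈ strictPairs (n + 1), ((ofGaps G m p.1 : ℚ) - ofGaps G m p.2) =
      ∑ r : Fin n, ((r : ℚ) + 1) * (n - r) * G r := by
  have hdiff : ∀ p ∈ strictPairs (n + 1), ((ofGaps G m p.1 : ℚ) - ofGaps G m p.2) =
      ∑ r : Fin n, if p ∈ Iic r.castSucc ×ˢ Ioi r.castSucc then (G r : ℚ) else 0 := by
    intro p hp
    have hlt := mem_strictPairs.1 hp
    simp only [ofGaps]
    push_cast
    rw [add_sub_add_left_eq_sub, ← sum_sub_distrib]
    refine sum_congr rfl fun r _ => ?_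
    simp only [mem_product, mem_Iic, mem_Ioi]
    split_ifs <;> grind
  rw [sum_congr rfl hdiff, sum_comm]
  refine sum_congr rfl fun r _ => ?_
  have hsub : Iic r.castSucc ×ˢ Ioi r.castSucc ⊆ strictPairs (n + 1) := fun p hp => by
    simp only [mem_product, mem_Iic, mem_Ioi] at hp
    exact mem_strictPairs.2 (hp.1.trans_lt hp.2)
  rw [sum_ite_mem, inter_eq_right.2 hsub, sum_const, card_product, Fin.card_Iic, Fin.card_Ioi,
    nsmul_eq_mul, Fin.val_castSucc, Nat.add_sub_cancel]
  push_cast [Nat.cast_sub r.isLt.le]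
  ring

lemma gapWeight_ne_zero (r : Fin n) : gapWeight n r ≠ 0 := by
  unfold gapWeight
  omega

lemma gapWeight_mul_le (r : Fin n) :
    ((n : ℚ) + 1) * gapWeight n r ≤ 2 * (((r : ℚ) + 1) * (n - r)) := by
  have ha : (gapWeight n r : ℚ) ≤ r + 1 := by exact_mod_cast min_le_left _ _
  have hb : (gapWeight n r : ℚ) ≤ n - r := by
    have h := Nat.cast_le (α := ℚ) |>.2 (min_le_right (r + 1 : ℕ) (n - r))
    rwa [Nat.cast_sub r.isLt.le] at h
  have hw : (0 : ℚ) ≤ gapWeight n r := by positivity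
  have hr : (0 : ℚ) ≤ r := by positivity
  nlinarith

lemma casimir_ofGaps_ge (G : Fin n → ℕ) (m : ℤ) :
    (m + gapMean G) ^ 2 + ∑ r, (gapWeight n r : ℚ) * G r / 2 ≤ casimir (n + 1) (ofGaps G m) := by
  have hN : (0 : ℚ) < n + 1 := by positivity
  have hsq := sq_sum_le_card_mul_sum_sq (s := univ) (f := fun i => (ofGaps G m i : ℚ))
  rw [sum_ofGaps, card_univ, Fintype.card_fin] at hsq
  have hpairs : ((n : ℚ) + 1) * ∑ r, (gapWeight n r : ℚ) * G r / 2 ≤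
      ∑ p ∈ strictPairs (n + 1), ((ofGaps G m p.1 : ℚ) - ofGaps G m p.2) := by
    rw [sum_strictPairs_ofGaps, mul_sum]
    refine sum_le_sum fun r _ => ?_
    have := gapWeight_mul_le r
    have hG : (0 : ℚ) ≤ G r := by positivity
    nlinarith
  have hmean : ((m : ℚ) + gapMean G) ^ 2 * (n + 1) =
      ((n + 1) * m + ∑ r : Fin n, ((r : ℚ) + 1) * G r) ^ 2 / (n + 1) := by
    rw [gapMean]
    field_simp
  have hsq' : ((m : ℚ) + gapMean G) ^ 2 * (n + 1) ≤ ∑ i, (ofGaps G m i : ℚ) ^ 2 := by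
    push_cast at hsq
    rw [hmean, div_le_iff₀ hN]
    linarith
  rw [casimir, le_div_iff₀ (by exact_mod_cast hN)]
  push_cast
  rw [← strictPairs]
  linarith

end Gaps

lemma tsum_ofReal_pow {x : ℝ} (h0 : 0 ≤ x) (h1 : x < 1) :
    ∑' k : ℕ, ENNReal.ofReal (x ^ k) = ENNReal.ofReal (1 - x)⁻¹ := by
  rw [← ENNReal.ofReal_tsum_of_nonneg (fun k => pow_nonneg h0 k)
    (summable_geometric_of_lt_one h0 h1), tsum_geometric_of_lt_one h0 h1]

lemma tsum_int_comp_natAbs_le (f : ℕ → ℝ≥0∞) : ∑' k : ℤ, f k.natAbs ≤ 2 * ∑' k : ℕ, f k := by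
  have hneg : ∀ k : ℕ, (-((k : ℤ) + 1)).natAbs = k + 1 := fun k => by omega
  rw [tsum_of_nat_of_neg_add_one ENNReal.summable ENNReal.summable, two_mul]
  simp only [Int.natAbs_natCast, hneg]
  exact add_le_add_right (ENNReal.tsum_comp_le_tsum_of_injective Nat.succ_injective f) _

lemma natAbs_sub_one_le_sq_add {u : ℝ} (hu : |u| ≤ 1 / 2) (k : ℤ) :
    (k.natAbs : ℝ) - 1 ≤ (k + u) ^ 2 := by
  rw [Nat.cast_natAbs, Int.cast_abs]
  rw [abs_le] at hu
  rcases abs_cases (k : ℝ) with ⟨h, -⟩ | ⟨h, -⟩ <;> rw [h] <;>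
    nlinarith [sq_nonneg ((k : ℝ) + u - 1 / 2), sq_nonneg ((k : ℝ) + u + 1 / 2)]

lemma tsum_ofReal_rpow_add_sq_le {q : ℝ} (hq0 : 0 < q) (hq1 : q < 1) (s : ℝ) :
    ∑' m : ℤ, ENNReal.ofReal (q ^ ((m + s) ^ 2)) ≤ ENNReal.ofReal (2 * q⁻¹ * (1 - q)⁻¹) := by
  set u := s - round s
  have hu : |u| ≤ 1 / 2 := abs_sub_round s
  have hterm : ∀ k : ℤ, ENNReal.ofReal (q ^ ((k + u) ^ 2)) ≤
      ENNReal.ofReal q⁻¹ * ENNReal.ofReal (q ^ k.natAbs) := fun k => by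
    rw [← ENNReal.ofReal_mul (by positivity)]
    refine ENNReal.ofReal_le_ofReal ?_
    calc q ^ ((k + u) ^ 2) ≤ q ^ ((k.natAbs : ℝ) - 1) :=
          Real.rpow_le_rpow_of_exponent_ge hq0 hq1.le (natAbs_sub_one_le_sq_add hu k)
      _ = q⁻¹ * q ^ k.natAbs := by
          rw [Real.rpow_sub_one hq0.ne', Real.rpow_natCast, inv_mul_eq_div]
  calc ∑' m : ℤ, ENNReal.ofReal (q ^ ((m + s) ^ 2))
      = ∑' m : ℤ, ENNReal.ofReal (q ^ (((m + round s : ℤ) + u : ℝ) ^ 2)) := by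
        congr! 4; push_cast; ring
    _ = ∑' k : ℤ, ENNReal.ofReal (q ^ ((k + u) ^ 2)) :=
        (Equiv.addRight (round s)).tsum_eq fun k : ℤ => ENNReal.ofReal (q ^ ((k + u) ^ 2))
    _ ≤ ∑' k : ℤ, ENNReal.ofReal q⁻¹ * ENNReal.ofReal (q ^ k.natAbs) := ENNReal.tsum_le_tsum hterm
    _ ≤ ENNReal.ofReal q⁻¹ * (2 * ∑' k : ℕ, ENNReal.ofReal (q ^ k)) := by
        rw [ENNReal.tsum_mul_left]
        gcongr
        exact tsum_int_comp_natAbs_le fun k => ENNReal.ofReal (q ^ k)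
    _ = ENNReal.ofReal (2 * q⁻¹ * (1 - q)⁻¹) := by
        rw [tsum_ofReal_pow hq0.le hq1, ENNReal.ofReal_mul (by positivity),
          ENNReal.ofReal_mul (by norm_num), ENNReal.ofReal_ofNat]
        ring

lemma inv_one_sub_le_exp {x c : ℝ} (hx : 0 ≤ x) (hxc : x ≤ c) (hc : c < 1) :
    (1 - x)⁻¹ ≤ Real.exp (x / (1 - c)) :=
  calc (1 - x)⁻¹ = x / (1 - x) + 1 := by
        field_simp [(show (0 : ℝ) < 1 - x by linarith).ne']
        ring
    _ ≤ x / (1 - c) + 1 := by gcongr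
    _ ≤ Real.exp (x / (1 - c)) := Real.add_one_le_exp _

lemma sum_range_pow_succ_le {c : ℝ} (hc0 : 0 ≤ c) (hc1 : c < 1) (n : ℕ) :
    ∑ k ∈ range n, c ^ (k + 1) ≤ c / (1 - c) := by
  calc ∑ k ∈ range n, c ^ (k + 1) = c * ∑ k ∈ Ico 0 n, c ^ k := by
        rw [mul_sum, range_eq_Ico]
        simp only [pow_succ']
    _ ≤ c * (c ^ 0 / (1 - c)) := by gcongr; exact geom_sum_Ico_le_of_lt_one hc0 hc1
    _ = c / (1 - c) := by rw [pow_zero, mul_one_div]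

lemma sum_pow_gapWeight_le {c : ℝ} (hc0 : 0 ≤ c) (hc1 : c < 1) (n : ℕ) :
    ∑ r : Fin n, c ^ gapWeight n r ≤ 2 * c / (1 - c) := by
  have hmin : ∀ r : Fin n, c ^ gapWeight n r ≤ c ^ ((r : ℕ) + 1) + c ^ (n - r) := fun r => by
    rcases min_choice ((r : ℕ) + 1) (n - r) with h | h <;>
      rw [gapWeight, h] <;> linarith [pow_nonneg hc0 ((r : ℕ) + 1), pow_nonneg hc0 (n - r)]
  have hrev : ∑ r : Fin n, c ^ (n - r) = ∑ k ∈ range n, c ^ (k + 1) := by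
    rw [Fin.sum_univ_eq_sum_range (fun k => c ^ (n - k)), ← sum_range_reflect]
    exact sum_congr rfl fun k hk => by rw [mem_range] at hk; congr 1; omega
  calc ∑ r : Fin n, c ^ gapWeight n r ≤ ∑ r : Fin n, (c ^ ((r : ℕ) + 1) + c ^ (n - r)) :=
        sum_le_sum fun r _ => hmin r
    _ = 2 * ∑ k ∈ range n, c ^ (k + 1) := by
        rw [sum_add_distrib, hrev, Fin.sum_univ_eq_sum_range (fun k => c ^ (k + 1))]
        ring
    _ ≤ 2 * c / (1 - c) := by
        rw [mul_div_assoc]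
        gcongr
        exact sum_range_pow_succ_le hc0 hc1 n

lemma prod_inv_one_sub_pow_gapWeight_le {c : ℝ} (hc0 : 0 ≤ c) (hc1 : c < 1) (n : ℕ) :
    ∏ r : Fin n, (1 - c ^ gapWeight n r)⁻¹ ≤ Real.exp (2 * c / (1 - c) ^ 2) := by
  have hx : ∀ r : Fin n, c ^ gapWeight n r ≤ c := fun r =>
    pow_le_of_le_one hc0 hc1.le (gapWeight_ne_zero r)
  calc ∏ r : Fin n, (1 - c ^ gapWeight n r)⁻¹
      ≤ ∏ r : Fin n, Real.exp (c ^ gapWeight n r / (1 - c)) :=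
        prod_le_prod (fun r _ => inv_nonneg.2 (by linarith [hx r]))
          fun r _ => inv_one_sub_le_exp (by positivity) (hx r) hc1
    _ = Real.exp ((∑ r : Fin n, c ^ gapWeight n r) / (1 - c)) := by rw [sum_div, Real.exp_sum]
    _ ≤ Real.exp (2 * c / (1 - c) ^ 2) := by
        refine Real.exp_le_exp.2 ?_
        calc (∑ r : Fin n, c ^ gapWeight n r) / (1 - c) ≤ 2 * c / (1 - c) / (1 - c) := by
              gcongr
              exact sum_pow_gapWeight_le hc0 hc1 n
          _ = 2 * c / (1 - c) ^ 2 := by rw [div_div, sq]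

lemma ENNReal.tsum_fin_pi_prod {α : Type*} :
    ∀ {n : ℕ} (f : Fin n → α → ℝ≥0∞), ∑' x : Fin n → α, ∏ i, f i (x i) = ∏ i, ∑' a, f i a
  | 0, f => by simp
  | n + 1, f => by
    rw [← (Fin.consEquiv fun _ => α).tsum_eq, ENNReal.tsum_prod', Fin.prod_univ_succ,
      ← ENNReal.tsum_fin_pi_prod fun i => f i.succ, ← ENNReal.tsum_mul_right]
    simp [Fin.consEquiv, Fin.prod_univ_succ, ENNReal.tsum_mul_left]

lemma rpow_casimir_ofGaps_le {q : ℝ} (hq0 : 0 < q) (hq1 : q < 1) {n : ℕ} (G : Fin n → ℕ)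
    (m : ℤ) :
    q ^ (casimir (n + 1) (ofGaps G m) : ℝ) ≤
      q ^ ((m + (gapMean G : ℝ)) ^ 2) * ∏ r, (√q ^ gapWeight n r) ^ G r := by
  have hcas := (Rat.cast_le (K := ℝ)).2 (casimir_ofGaps_ge G m)
  push_cast at hcas
  calc q ^ (casimir (n + 1) (ofGaps G m) : ℝ)
      ≤ q ^ ((m + (gapMean G : ℝ)) ^ 2 + ∑ r, (gapWeight n r : ℝ) * G r / 2) :=
        Real.rpow_le_rpow_of_exponent_ge hq0 hq1.le hcas
    _ = q ^ ((m + (gapMean G : ℝ)) ^ 2) * ∏ r, (√q ^ gapWeight n r) ^ G r := by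
        rw [Real.rpow_add hq0, Real.rpow_sum_of_pos hq0]
        congr 1
        refine prod_congr rfl fun r _ => ?_
        rw [Real.rpow_div_two_eq_sqrt _ hq0.le, ← pow_mul]
        exact_mod_cast Real.rpow_natCast _ _

lemma tsum_ofReal_rpow_casimir_le {q : ℝ} (hq0 : 0 < q) (hq1 : q < 1) (n : ℕ) :
    ∑' x : NonincTuple (n + 1), ENNReal.ofReal (q ^ (casimir (n + 1) x.1 : ℝ)) ≤
      ENNReal.ofReal (2 * q⁻¹ * (1 - q)⁻¹ * Real.exp (2 * √q / (1 - √q) ^ 2)) := by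
  have hc0 : 0 ≤ √q := Real.sqrt_nonneg q
  have hc1 : √q < 1 := (Real.sqrt_lt' one_pos).2 (by simpa using hq1)
  have hsurj : Function.Surjective fun p : (Fin n → ℕ) × ℤ =>
      (⟨ofGaps p.1 p.2, fun _ _ h => antitone_ofGaps p.1 p.2 h⟩ : NonincTuple (n + 1)) :=
    fun x => ⟨(gaps x.1, x.1 (Fin.last n)), Subtype.ext (ofGaps_gaps (NonincTuple.antitone x))⟩
  calc ∑' x : NonincTuple (n + 1), ENNReal.ofReal (q ^ (casimir (n + 1) x.1 : ℝ))
      ≤ ∑' p : (Fin n → ℕ) × ℤ, ENNReal.ofReal (q ^ (casimir (n + 1) (ofGaps p.1 p.2) : ℝ)) :=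
        ENNReal.tsum_le_tsum_comp_of_surjective hsurj _
    _ ≤ ∑' (G : Fin n → ℕ) (m : ℤ), ENNReal.ofReal (q ^ ((m + (gapMean G : ℝ)) ^ 2)) *
          ∏ r, ENNReal.ofReal ((√q ^ gapWeight n r) ^ G r) := by
        rw [ENNReal.tsum_prod']
        gcongr with G m
        rw [← ENNReal.ofReal_prod_of_nonneg fun _ _ => by positivity,
          ← ENNReal.ofReal_mul (by positivity)]
        exact ENNReal.ofReal_le_ofReal (rpow_casimir_ofGaps_le hq0 hq1 G m)
    _ ≤ ∑' G : Fin n → ℕ, ENNReal.ofReal (2 * q⁻¹ * (1 - q)⁻¹) *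
          ∏ r, ENNReal.ofReal ((√q ^ gapWeight n r) ^ G r) := by
        simp_rw [ENNReal.tsum_mul_right]
        gcongr with G
        exact tsum_ofReal_rpow_add_sq_le hq0 hq1 _
    _ = ENNReal.ofReal (2 * q⁻¹ * (1 - q)⁻¹) *
          ENNReal.ofReal (∏ r : Fin n, (1 - √q ^ gapWeight n r)⁻¹) := by
        have hlt : ∀ r : Fin n, √q ^ gapWeight n r < 1 := fun r =>
          pow_lt_one₀ hc0 hc1 (gapWeight_ne_zero r)
        rw [ENNReal.tsum_mul_left, ENNReal.tsum_fin_pi_prod (fun r k =>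
          ENNReal.ofReal ((√q ^ gapWeight n r) ^ k)),
          ENNReal.ofReal_prod_of_nonneg fun r _ => inv_nonneg.2 (sub_nonneg.2 (hlt r).le)]
        simp_rw [tsum_ofReal_pow (pow_nonneg hc0 _) (hlt _)]
    _ ≤ ENNReal.ofReal (2 * q⁻¹ * (1 - q)⁻¹) *
          ENNReal.ofReal (Real.exp (2 * √q / (1 - √q) ^ 2)) := by
        gcongr
        exact prod_inv_one_sub_pow_gapWeight_le hc0 hc1 n
    _ = _ := (ENNReal.ofReal_mul (by have := sub_pos.2 hq1; positivity)).symm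

noncomputable def ymWeight (N g : ℕ) (t : ℝ) (l : Fin N → ℤ) : ℝ≥0∞ :=
  ENNReal.ofReal (Real.exp (-(t / 2)) ^ (casimir N l : ℝ) * (weylDim N l : ℝ) ^ (2 - 2 * (g : ℤ)))

def constTuple (N : ℕ) (m : ℤ) : NonincTuple N :=
  ⟨fun _ => m, fun _ _ _ => le_rfl⟩

lemma casimir_const (n : ℕ) (m : ℤ) : casimir (n + 1) (fun _ => m) = (m : ℚ) ^ 2 := by
  simp only [casimir, sub_self, sum_const, card_univ, Fintype.card_fin, nsmul_eq_mul, mul_zero,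
    add_zero, Nat.cast_add, Nat.cast_one]
  field_simp

lemma weylDim_const (N : ℕ) (m : ℤ) : weylDim N (fun _ => m) = 1 :=
  prod_eq_one fun p hp => by
    have hlt : ((p.1 : ℕ) : ℚ) < (p.2 : ℕ) := by exact_mod_cast (mem_filter.1 hp).2
    simp only [sub_self, zero_add]
    exact div_self (by linarith)

lemma tsum_range_constTuple (n g : ℕ) (t : ℝ) :
    ∑' x : Set.range (constTuple (n + 1)), ymWeight (n + 1) g t x.1.1 =
      thetaE (Real.exp (-(t / 2))) := by
  rw [tsum_range (g := constTuple (n + 1)) (fun y => ymWeight (n + 1) g t y.1)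
    fun a b h => by simpa [constTuple] using congrFun (congrArg Subtype.val h) 0]
  refine tsum_congr fun m => ?_
  rw [ymWeight, constTuple, casimir_const, weylDim_const, Rat.cast_one, one_zpow, mul_one,
    ← Real.rpow_natCast]
  push_cast [Nat.cast_natAbs, Int.cast_abs, sq_abs]
  rfl

lemma exists_drop_of_notMem_range_constTuple {n : ℕ} {x : NonincTuple (n + 1)}
    (hx : x ∉ Set.range (constTuple (n + 1))) : ∃ r : Fin n, x.1 r.succ < x.1 r.castSucc := by
  by_contra! h
  have hmono := Fin.monotone_iff_le_succ.2 h
  exact hx ⟨x.1 0, Subtype.ext (funext fun i =>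
    le_antisymm (hmono (Fin.zero_le i)) (x.2 0 i (Fin.zero_le i)))⟩

lemma ymWeight_le_of_drop {n g : ℕ} (hg : 2 ≤ g) (t : ℝ) {l : Fin (n + 1) → ℤ}
    (hl : Antitone l) (r : Fin n) (hr : l r.succ < l r.castSucc) :
    ymWeight (n + 1) g t l ≤ ENNReal.ofReal (4 / ((n : ℝ) + 1) ^ 2) *
      ENNReal.ofReal (Real.exp (-(t / 2)) ^ (casimir (n + 1) l : ℝ)) := by
  rw [ymWeight, ← ENNReal.ofReal_mul (by positivity), mul_comm (4 / _)]
  exact ENNReal.ofReal_le_ofReal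
    (mul_le_mul_of_nonneg_left (weylDim_zpow_le hg hl r hr) (by positivity))

lemma ZUN_succ_eq (n g : ℕ) (t : ℝ) :
    ZUN (n + 1) g t = thetaE (Real.exp (-(t / 2))) +
      ∑' x : ↥(Set.range (constTuple (n + 1)))ᶜ, ymWeight (n + 1) g t x.1.1 := by
  rw [← tsum_range_constTuple n g t]
  exact (ENNReal.summable.tsum_add_tsum_compl ENNReal.summable).symm

lemma exists_ZUN_succ_le {g : ℕ} (hg : 2 ≤ g) {t : ℝ} (ht : 0 < t) :
    ∃ C : ℝ, ∀ n : ℕ, ZUN (n + 1) g t ≤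
      thetaE (Real.exp (-(t / 2))) + ENNReal.ofReal (4 / ((n : ℝ) + 1) ^ 2) * ENNReal.ofReal C := by
  set q := Real.exp (-(t / 2))
  have hq1 : q < 1 := Real.exp_lt_one_iff.2 (by linarith)
  refine ⟨2 * q⁻¹ * (1 - q)⁻¹ * Real.exp (2 * √q / (1 - √q) ^ 2), fun n => ?_⟩
  rw [ZUN_succ_eq]
  gcongr
  calc ∑' x : ↥(Set.range (constTuple (n + 1)))ᶜ, ymWeight (n + 1) g t x.1.1
      ≤ ∑' x : ↥(Set.range (constTuple (n + 1)))ᶜ,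
          ENNReal.ofReal (4 / ((n : ℝ) + 1) ^ 2) *
            ENNReal.ofReal (q ^ (casimir (n + 1) x.1.1 : ℝ)) :=
        ENNReal.tsum_le_tsum fun x =>
          let ⟨r, hr⟩ := exists_drop_of_notMem_range_constTuple x.2
          ymWeight_le_of_drop hg t x.1.antitone r hr
    _ ≤ ENNReal.ofReal (4 / ((n : ℝ) + 1) ^ 2) *
          ∑' x : NonincTuple (n + 1), ENNReal.ofReal (q ^ (casimir (n + 1) x.1 : ℝ)) := by
        rw [ENNReal.tsum_mul_left]
        gcongr
        exact ENNReal.tsum_comp_le_tsum_of_injective Subtype.val_injective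
          fun x : NonincTuple (n + 1) => ENNReal.ofReal (q ^ (casimir (n + 1) x.1 : ℝ))
    _ ≤ _ := by
        gcongr
        exact tsum_ofReal_rpow_casimir_le (Real.exp_pos _) hq1 n

/-- For a fixed genus `g ≥ 2` and area `t > 0`, with `q = e^{−t/2}`:
`lim_{N→∞} Z_{U(N)}(g,t) = θ(q)`. -/
theorem ZUN_tendsto_theta (g : ℕ) (hg : 2 ≤ g) (t : ℝ) (ht : 0 < t) :
    Filter.Tendsto (fun N : ℕ => ZUN N g t) Filter.atTop
      (nhds (thetaE (Real.exp (-(t / 2))))) := by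
  obtain ⟨C, hC⟩ := exists_ZUN_succ_le hg ht
  have hsmall : Tendsto (fun n : ℕ => 4 / ((n : ℝ) + 1) ^ 2) atTop (𝓝 0) :=
    tendsto_const_nhds.div_atTop ((tendsto_pow_atTop two_ne_zero).comp
      (tendsto_atTop_add_const_right _ 1 tendsto_natCast_atTop_atTop))
  have hupper : Tendsto (fun n : ℕ => thetaE (Real.exp (-(t / 2))) +
      ENNReal.ofReal (4 / ((n : ℝ) + 1) ^ 2) * ENNReal.ofReal C) atTop
      (𝓝 (thetaE (Real.exp (-(t / 2))))) := by
    simpa using tendsto_const_nhds.add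
      (ENNReal.Tendsto.mul_const (ENNReal.tendsto_ofReal hsmall) (Or.inr ENNReal.ofReal_ne_top))
  rw [← tendsto_add_atTop_iff_nat 1]
  exact tendsto_of_tendsto_of_tendsto_of_le_of_le tendsto_const_nhds hupper
    (fun n => (ZUN_succ_eq n g t).symm ▸ le_self_add) hC
end

section
/- Let N ≥ 2 be an integer, t > 0 a real, and q = e^{−t/2}. For every function F from nonincreasing tuples λ ∈ ℤ^N to [0,∞], one has Σ_λ F(λ) e^{−(t/2)c₂(λ)} = Σ_{(α,β,n)} F(λ_N(α,β,n)) · q^{|α|+|β|+n²} · q^{(2/N)(K(α)+K(β)+n(|α|−|β|))}, where the left sum is over all nonincreasing λ ∈ ℤ^N, the right sum is over all triples (α,β,n) with α, β integer partitions satisfying ℓ(α) ≤ ⌊(N+1)/2⌋ − 1 and ℓ(β) ≤ N − ⌊(N+1)/2⌋ and n ∈ ℤ, c₂(λ) = (1/N)(Σ_i λ_i² + Σ_{i<j} (λ_i − λ_j)), K(γ) = Σ_{i=1}^{ℓ(γ)} Σ_{j=1}^{γ_i} (j − i), and λ_N(α,β,n) = (α₁+n, …, α_{ℓ(α)}+n,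 n, …, n, n−β_{ℓ(β)}, …, n−β₁). -/
/-- An integer partition: a nonincreasing sequence of nonnegative integers with finitely many
nonzero terms (indexed from `0`, so `α₁ = part 0`, `α₂ = part 1`, …). -/
structure IntPartition where
  part : ℕ → ℕ
  antitone' : ∀ i j : ℕ, i ≤ j → part j ≤ part i
  finite_support' : ∃ M : ℕ, ∀ i : ℕ, M ≤ i → part i = 0

namespace IntPartition

/-- The length `ℓ(α)` of a partition: the number of nonzero terms. -/
noncomputable def len (α : IntPartition) : ℕ :=
  sInf {M : ℕ | ∀ i : ℕ, M ≤ i → α.part i = 0}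

/-- The size `|α| = Σ_i α_i` of a partition. -/
noncomputable def size (α : IntPartition) : ℕ :=
  ∑ i ∈ Finset.range α.len, α.part i

/-- The total content `K(α) = Σ_{i=1}^{ℓ(α)} Σ_{j=1}^{α_i} (j − i)` of a partition
(in 0-indexed form, `Σ_{i<ℓ(α)} Σ_{j<α_i} (j − i)`). -/
noncomputable def content (α : IntPartition) : ℤ :=
  ∑ i ∈ Finset.range α.len, ∑ j ∈ Finset.range (α.part i), ((j : ℤ) - (i : ℤ))

end IntPartition

/-- The highest weight `λ_N(α,β,n) = (α₁+n, …, α_{ℓ(α)}+n, n, …, n, n−β_{ℓ(β)}, …, n−β₁)`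
of `U(N)` associated to two partitions `α, β` and an integer `n`. -/
noncomputable def lamN (N : ℕ) (α β : IntPartition) (n : ℤ) : Fin N → ℤ :=
  fun i =>
    if (i : ℕ) < α.len then n + α.part (i : ℕ)
    else if (i : ℕ) < N - β.len then n
    else n - β.part (N - 1 - (i : ℕ))

/-! ### Auxiliary lemmas about partitions -/

namespace IntPartition

lemma part_eq_zero {α : IntPartition} {i : ℕ} (h : α.len ≤ i) : α.part i = 0 :=
  Nat.sInf_mem α.finite_support' i h

lemma len_le {α : IntPartition} {M : ℕ} (h : ∀ i, M ≤ i → α.part i = 0) : α.len ≤ M :=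
  Nat.sInf_le h

lemma ptext {α β : IntPartition} (h : α.part = β.part) : α = β := by
  cases α; cases β; simpa using h

/-- Extend a sum over `range α.len` to a sum over a larger range. -/
lemma sum_shift {R : Type*} [AddCommMonoid R] (α : IntPartition) {M : ℕ} (h : α.len ≤ M)
    (f : ℕ → ℕ → R) (hf : ∀ i, f i 0 = 0) :
    ∑ i ∈ Finset.range M, f i (α.part i) = ∑ i ∈ Finset.range α.len, f i (α.part i) := by
  refine (Finset.sum_subset (Finset.range_subset_range.2 h) fun i _ hi => ?_).symm
  rw [part_eq_zero (by simpa using hi)]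
  exact hf i

end IntPartition

open IntPartition Finset

lemma gaussQ (a : ℕ) : (∑ j ∈ Finset.range a, (j : ℚ)) * 2 = a * (a - 1) := by
  induction a with
  | zero => simp
  | succ k ih =>
    rw [Finset.sum_range_succ]
    push_cast
    push_cast at ih
    ring_nf
    ring_nf at ih
    linarith

lemma two_content (α : IntPartition) :
    2 * (α.content : ℚ) =
      ∑ i ∈ Finset.range α.len, ((α.part i : ℚ) ^ 2 - α.part i - 2 * i * α.part i) := by
  rw [content]
  push_cast
  rw [Finset.mul_sum]
  refine Finset.sum_congr rfl fun i _ => ?_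
  rw [Finset.sum_sub_distrib, Finset.sum_const, Finset.card_range, mul_sub]
  have h2 := gaussQ (α.part i)
  ring_nf
  ring_nf at h2
  linarith

lemma count_gt (N i : ℕ) (hi : i < N) :
    ∑ j ∈ Finset.range N, (if i < j then (1 : ℚ) else 0) = (N : ℚ) - 1 - i := by
  rw [← Finset.sum_filter]
  have h : Finset.filter (fun j => i < j) (Finset.range N) = Finset.Ico (i + 1) N := by
    ext x
    simp only [Finset.mem_filter, Finset.mem_range, Finset.mem_Ico]
    omega
  rw [h]
  simp only [Finset.sum_const, Nat.card_Ico, nsmul_eq_mul, mul_one]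
  rw [Nat.cast_sub (by omega : i + 1 ≤ N)]
  push_cast
  ring

lemma count_lt (N j : ℕ) (hj : j ≤ N) :
    ∑ i ∈ Finset.range N, (if i < j then (1 : ℚ) else 0) = (j : ℚ) := by
  rw [← Finset.sum_filter]
  have h : Finset.filter (fun i => i < j) (Finset.range N) = Finset.range j := by
    ext x
    simp only [Finset.mem_filter, Finset.mem_range]
    omega
  rw [h]
  simp

/-- The pair sum of differences as a weighted single sum. -/
lemma pairsum (N : ℕ) (f : ℕ → ℚ) :
    ∑ p ∈ Finset.univ.filter (fun p : Fin N × Fin N => p.1 < p.2), (f p.1 - f p.2)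
      = ∑ i ∈ Finset.range N, ((N : ℚ) - 1 - 2 * i) * f i := by
  rw [Finset.sum_filter, Fintype.sum_prod_type]
  have step : ∀ i : Fin N, ∑ j : Fin N, (if i < j then f (i : ℕ) - f (j : ℕ) else 0)
      = (((N : ℚ) - 1 - i) * f i) - ∑ j : Fin N, (if i < j then f (j : ℕ) else 0) := by
    intro i
    rw [eq_sub_iff_add_eq, ← Finset.sum_add_distrib]
    have key : ∀ j : Fin N, (if i < j then f (i : ℕ) - f (j : ℕ) else 0)
        + (if i < j then f (j : ℕ) else 0) = f (i : ℕ) * (if i < j then (1:ℚ) else 0) := by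
      intro j; split <;> ring
    rw [Finset.sum_congr rfl fun j _ => key j]
    rw [← Finset.mul_sum]
    have hcount : ∑ j : Fin N, (if i < j then (1:ℚ) else 0)
        = ∑ j ∈ Finset.range N, (if (i : ℕ) < j then (1:ℚ) else 0) := by
      rw [← Fin.sum_univ_eq_sum_range (fun j => if (i:ℕ) < j then (1:ℚ) else 0) N]
      exact Finset.sum_congr rfl fun j _ => rfl
    rw [hcount, count_gt N i i.2]
    ring
  rw [Finset.sum_congr rfl fun i _ => step i, Finset.sum_sub_distrib]
  have swap : ∑ i : Fin N, ∑ j : Fin N, (if i < j then f (j : ℕ) else 0)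
      = ∑ j : Fin N, (j : ℚ) * f (j : ℕ) := by
    rw [Finset.sum_comm]
    refine Finset.sum_congr rfl fun j _ => ?_
    have key : ∀ i : Fin N, (if i < j then f (j : ℕ) else 0)
        = f (j:ℕ) * (if i < j then (1:ℚ) else 0) := by
      intro i; split <;> ring
    rw [Finset.sum_congr rfl fun i _ => key i, ← Finset.mul_sum]
    have hcount : ∑ i : Fin N, (if i < j then (1:ℚ) else 0)
        = ∑ i ∈ Finset.range N, (if i < (j : ℕ) then (1:ℚ) else 0) := by
      rw [← Fin.sum_univ_eq_sum_range (fun i => if i < (j:ℕ) then (1:ℚ) else 0) N]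
      exact Finset.sum_congr rfl fun i _ => rfl
    rw [hcount, count_lt N j (le_of_lt j.2)]
    ring
  rw [swap]
  rw [← Fin.sum_univ_eq_sum_range (fun i => ((N : ℚ) - 1 - 2 * i) * f i) N]
  rw [← Finset.sum_sub_distrib]
  exact Finset.sum_congr rfl fun i _ => by ring

/-! ### Pointwise description of `lamN` -/

lemma lamN_eq (N : ℕ) (hN : 2 ≤ N) (α β : IntPartition) (n : ℤ)
    (hα : α.len ≤ (N + 1) / 2 - 1) (hβ : β.len ≤ N - (N + 1) / 2) (i : Fin N) :
    lamN N α β n i = n + (α.part (i : ℕ) : ℤ) - (β.part (N - 1 - (i : ℕ)) : ℤ) := by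
  have hi := i.2
  unfold lamN
  split_ifs with h1 h2
  · have hb : β.len ≤ N - 1 - (i : ℕ) := by omega
    rw [part_eq_zero hb]
    push_cast; ring
  · have ha : α.len ≤ (i : ℕ) := by omega
    have hb : β.len ≤ N - 1 - (i : ℕ) := by omega
    rw [part_eq_zero ha, part_eq_zero hb]
    push_cast; ring
  · have ha : α.len ≤ (i : ℕ) := by omega
    rw [part_eq_zero ha]
    push_cast; ring

lemma lamN_eq' (N : ℕ) (hN : 2 ≤ N) (α β : IntPartition) (n : ℤ)
    (hα : α.len ≤ (N + 1) / 2 - 1) (hβ : β.len ≤ N - (N + 1) / 2) (k : ℕ) (hk : k < N) :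
    lamN N α β n ⟨k, hk⟩ = n + (α.part k : ℤ) - (β.part (N - 1 - k) : ℤ) :=
  lamN_eq N hN α β n hα hβ ⟨k, hk⟩

lemma part_mul_part (N : ℕ) (hN : 2 ≤ N) (α β : IntPartition)
    (hα : α.len ≤ (N + 1) / 2 - 1) (hβ : β.len ≤ N - (N + 1) / 2) (i : ℕ) :
    (α.part i : ℚ) * (β.part (N - 1 - i) : ℚ) = 0 := by
  rcases lt_or_ge i α.len with h | h
  · have hb : β.len ≤ N - 1 - i := by omega
    rw [part_eq_zero hb]
    push_cast; ring
  · rw [part_eq_zero h]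
    push_cast; ring

/-! ### The Casimir identity -/

lemma casimir_lamN (N : ℕ) (hN : 2 ≤ N) (α β : IntPartition) (n : ℤ)
    (hα : α.len ≤ (N + 1) / 2 - 1) (hβ : β.len ≤ N - (N + 1) / 2) :
    casimir N (lamN N α β n)
      = (((α.size : ℚ) + β.size) + (n : ℚ) ^ 2)
        + (2 / N) * (((α.content : ℚ) + β.content) + (n : ℚ) * ((α.size : ℚ) - β.size)) := by
  have hla : ∀ i : Fin N, ((lamN N α β n i : ℚ))
      = (n : ℚ) + (α.part (i : ℕ) : ℚ) - (β.part (N - 1 - (i : ℕ)) : ℚ) := by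
    intro i
    rw [lamN_eq N hN α β n hα hβ i]
    push_cast; ring
  set Sa : ℚ := ∑ i ∈ Finset.range N, (α.part i : ℚ) with hSa
  set Sb : ℚ := ∑ i ∈ Finset.range N, (β.part i : ℚ) with hSb
  set Qa : ℚ := ∑ i ∈ Finset.range N, (α.part i : ℚ) ^ 2 with hQa
  set Qb : ℚ := ∑ i ∈ Finset.range N, (β.part i : ℚ) ^ 2 with hQb
  set Ta : ℚ := ∑ i ∈ Finset.range N, (i : ℚ) * α.part i with hTa
  set Tb : ℚ := ∑ i ∈ Finset.range N, (i : ℚ) * β.part i with hTb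
  have hlenα : α.len ≤ N := le_trans hα (by omega)
  have hlenβ : β.len ≤ N := le_trans hβ (by omega)
  have hSa' : Sa = (α.size : ℚ) := by
    rw [hSa, size, α.sum_shift hlenα (fun _ x => (x : ℚ)) (fun _ => by norm_num)]
    push_cast; rfl
  have hSb' : Sb = (β.size : ℚ) := by
    rw [hSb, size, β.sum_shift hlenβ (fun _ x => (x : ℚ)) (fun _ => by norm_num)]
    push_cast; rfl
  have hKa : 2 * (α.content : ℚ) = Qa - Sa - 2 * Ta := by
    rw [two_content, ← α.sum_shift hlenα (fun i x => (x : ℚ) ^ 2 - x - 2 * i * x)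
      (fun i => by norm_num)]
    rw [hQa, hSa, hTa, Finset.mul_sum, ← Finset.sum_sub_distrib, ← Finset.sum_sub_distrib]
    exact Finset.sum_congr rfl fun i _ => by ring
  have hKb : 2 * (β.content : ℚ) = Qb - Sb - 2 * Tb := by
    rw [two_content, ← β.sum_shift hlenβ (fun i x => (x : ℚ) ^ 2 - x - 2 * i * x)
      (fun i => by norm_num)]
    rw [hQb, hSb, hTb, Finset.mul_sum, ← Finset.sum_sub_distrib, ← Finset.sum_sub_distrib]
    exact Finset.sum_congr rfl fun i _ => by ring
  -- the sum of λ_i²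
  have hsq : ∑ i : Fin N, ((lamN N α β n i : ℚ)) ^ 2
      = N * (n:ℚ)^2 + Qa + Qb + 2 * n * Sa - 2 * n * Sb := by
    have key : ∀ i : Fin N, ((lamN N α β n i : ℚ)) ^ 2
        = (fun k => ((n : ℚ) + (α.part k : ℚ) - (β.part (N - 1 - k) : ℚ)) ^ 2) (i : ℕ) := by
      intro i; rw [hla i]
    rw [Finset.sum_congr rfl fun i _ => key i,
      Fin.sum_univ_eq_sum_range
        (fun k => ((n : ℚ) + (α.part k : ℚ) - (β.part (N - 1 - k) : ℚ)) ^ 2) N]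
    have expand : ∀ k ∈ Finset.range N,
        ((n : ℚ) + (α.part k : ℚ) - (β.part (N - 1 - k) : ℚ)) ^ 2
          = (n:ℚ)^2 + (α.part k : ℚ)^2 + (β.part (N - 1 - k) : ℚ)^2
            + 2 * (n:ℚ) * (α.part k : ℚ) - 2 * (n:ℚ) * (β.part (N - 1 - k) : ℚ) := by
      intro k hk
      have h0 := part_mul_part N hN α β hα hβ k
      linear_combination (-2 : ℚ) * h0
    rw [Finset.sum_congr rfl expand]
    rw [Finset.sum_sub_distrib, Finset.sum_add_distrib, Finset.sum_add_distrib,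
      Finset.sum_add_distrib]
    have r1 : ∑ x ∈ Finset.range N, (β.part (N - 1 - x) : ℚ)^2 = Qb := by
      rw [hQb]; exact Finset.sum_range_reflect (fun j => ((β.part j : ℚ))^2) N
    have r2 : ∑ x ∈ Finset.range N, (β.part (N - 1 - x) : ℚ) = Sb := by
      rw [hSb]; exact Finset.sum_range_reflect (fun j => ((β.part j : ℚ))) N
    have r3 : ∑ x ∈ Finset.range N, 2 * (n:ℚ) * (β.part (N - 1 - x) : ℚ) = 2 * n * Sb := by
      rw [← r2, Finset.mul_sum]
    have r4 : ∑ x ∈ Finset.range N, 2 * (n:ℚ) * (α.part x : ℚ) = 2 * n * Sa := by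
      rw [hSa, Finset.mul_sum]
    rw [r1, r3, r4, Finset.sum_const, Finset.card_range, nsmul_eq_mul, ← hQa]
  -- the pair sum
  have hpair : ∑ p ∈ Finset.univ.filter (fun p : Fin N × Fin N => p.1 < p.2),
        ((lamN N α β n p.1 : ℚ) - (lamN N α β n p.2 : ℚ))
      = (N - 1) * Sa - 2 * Ta + (N - 1) * Sb - 2 * Tb := by
    have heq : ∑ p ∈ Finset.univ.filter (fun p : Fin N × Fin N => p.1 < p.2),
          ((lamN N α β n p.1 : ℚ) - (lamN N α β n p.2 : ℚ))
        = ∑ p ∈ Finset.univ.filter (fun p : Fin N × Fin N => p.1 < p.2),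
          ((fun k => (n : ℚ) + (α.part k : ℚ) - (β.part (N - 1 - k) : ℚ)) ((p.1 : ℕ))
            - (fun k => (n : ℚ) + (α.part k : ℚ) - (β.part (N - 1 - k) : ℚ)) ((p.2 : ℕ))) := by
      refine Finset.sum_congr rfl fun p _ => ?_
      rw [hla p.1, hla p.2]
    rw [heq, pairsum N (fun k => (n : ℚ) + (α.part k : ℚ) - (β.part (N - 1 - k) : ℚ))]
    have expand : ∀ k ∈ Finset.range N,
        ((N : ℚ) - 1 - 2 * k) * ((n : ℚ) + (α.part k : ℚ) - (β.part (N - 1 - k) : ℚ))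
          = ((N : ℚ) - 1 - 2 * k) * n
            + (((N:ℚ) - 1) * (α.part k : ℚ) - 2 * ((k:ℚ) * (α.part k : ℚ)))
            - ((N:ℚ) - 1 - 2 * ((N:ℚ) - 1 - ((N - 1 - k : ℕ) : ℚ))) * (β.part (N - 1 - k) : ℚ) := by
      intro k hk
      simp only [Finset.mem_range] at hk
      have hcast : ((N - 1 - k : ℕ) : ℚ) = (N : ℚ) - 1 - k := by
        rw [Nat.cast_sub (by omega : k ≤ N - 1), Nat.cast_sub (by omega : 1 ≤ N)]
        push_cast; ring
      rw [hcast]; ring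
    rw [Finset.sum_congr rfl expand]
    rw [Finset.sum_sub_distrib, Finset.sum_add_distrib]
    have r5 : ∑ x ∈ Finset.range N,
          ((N:ℚ) - 1 - 2 * ((N:ℚ) - 1 - ((N - 1 - x : ℕ) : ℚ))) * (β.part (N - 1 - x) : ℚ)
        = ∑ j ∈ Finset.range N, ((N:ℚ) - 1 - 2 * ((N:ℚ) - 1 - (j : ℚ))) * (β.part j : ℚ) :=
      Finset.sum_range_reflect (fun j => ((N:ℚ) - 1 - 2 * ((N:ℚ) - 1 - (j:ℚ))) * (β.part j : ℚ)) N
    rw [r5]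
    have hz : ∑ k ∈ Finset.range N, ((N : ℚ) - 1 - 2 * k) * n = 0 := by
      rw [← Finset.sum_mul]
      have h1 : ∑ k ∈ Finset.range N, ((N : ℚ) - 1 - 2 * (k:ℚ)) = 0 := by
        rw [Finset.sum_sub_distrib, Finset.sum_const, Finset.card_range, nsmul_eq_mul,
          ← Finset.mul_sum]
        have hg := gaussQ N
        linarith
      rw [h1, zero_mul]
    rw [hz]
    have hsplit : ∑ k ∈ Finset.range N,
          (((N:ℚ) - 1) * (α.part k : ℚ) - 2 * ((k:ℚ) * (α.part k : ℚ)))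
        = (N - 1) * Sa - 2 * Ta := by
      rw [Finset.sum_sub_distrib, ← Finset.mul_sum, ← Finset.mul_sum, hSa, hTa]
    have hsplit2 : ∑ j ∈ Finset.range N,
          ((N:ℚ) - 1 - 2 * ((N:ℚ) - 1 - (j:ℚ))) * (β.part j : ℚ)
        = 2 * Tb - (N - 1) * Sb := by
      rw [hTb, hSb, Finset.mul_sum, Finset.mul_sum, ← Finset.sum_sub_distrib]
      exact Finset.sum_congr rfl fun j _ => by ring
    rw [hsplit, hsplit2]
    ring
  rw [casimir, hsq, hpair]
  have hQa' : Qa = 2 * (α.content : ℚ) + Sa + 2 * Ta := by linarith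
  have hQb' : Qb = 2 * (β.content : ℚ) + Sb + 2 * Tb := by linarith
  rw [hQa', hQb', hSa', hSb']
  have hN0 : (N : ℚ) ≠ 0 := by positivity
  field_simp
  ring

/-! ### The bijection -/

/-- The `α`-partition extracted from a nonincreasing tuple. -/
noncomputable def alphaOf (N : ℕ) (hN : 2 ≤ N) (l : Fin N → ℤ)
    (hl : ∀ i j : Fin N, i ≤ j → l j ≤ l i) : IntPartition where
  part i := if h : i < (N + 1) / 2 - 1
    then (l ⟨i, by omega⟩ - l ⟨(N + 1) / 2 - 1, by omega⟩).toNat else 0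
  antitone' i j hij := by
    by_cases hj : j < (N + 1) / 2 - 1
    · rw [dif_pos hj, dif_pos (lt_of_le_of_lt hij hj)]
      apply Int.toNat_le_toNat
      have := hl ⟨i, by omega⟩ ⟨j, by omega⟩ (Fin.mk_le_mk.mpr hij)
      omega
    · rw [dif_neg hj]; exact Nat.zero_le _
  finite_support' := ⟨(N + 1) / 2 - 1, fun i hi => dif_neg (by omega)⟩

/-- The `β`-partition extracted from a nonincreasing tuple. -/
noncomputable def betaOf (N : ℕ) (hN : 2 ≤ N) (l : Fin N → ℤ)
    (hl : ∀ i j : Fin N, i ≤ j → l j ≤ l i) : IntPartition where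
  part j := if h : j < N - (N + 1) / 2
    then (l ⟨(N + 1) / 2 - 1, by omega⟩ - l ⟨N - 1 - j, by omega⟩).toNat else 0
  antitone' j j' hjj' := by
    by_cases hj : j' < N - (N + 1) / 2
    · rw [dif_pos hj, dif_pos (lt_of_le_of_lt hjj' hj)]
      apply Int.toNat_le_toNat
      have := hl ⟨N - 1 - j', by omega⟩ ⟨N - 1 - j, by omega⟩ (Fin.mk_le_mk.mpr (by omega))
      omega
    · rw [dif_neg hj]; exact Nat.zero_le _
  finite_support' := ⟨N - (N + 1) / 2, fun j hj => dif_neg (by omega)⟩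

lemma alphaOf_part (N : ℕ) (hN : 2 ≤ N) (l : Fin N → ℤ)
    (hl : ∀ i j : Fin N, i ≤ j → l j ≤ l i) (i : ℕ) :
    (alphaOf N hN l hl).part i = if h : i < (N + 1) / 2 - 1
      then (l ⟨i, by omega⟩ - l ⟨(N + 1) / 2 - 1, by omega⟩).toNat else 0 := rfl

lemma betaOf_part (N : ℕ) (hN : 2 ≤ N) (l : Fin N → ℤ)
    (hl : ∀ i j : Fin N, i ≤ j → l j ≤ l i) (j : ℕ) :
    (betaOf N hN l hl).part j = if h : j < N - (N + 1) / 2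
      then (l ⟨(N + 1) / 2 - 1, by omega⟩ - l ⟨N - 1 - j, by omega⟩).toNat else 0 := rfl

lemma alphaOf_len_le (N : ℕ) (hN : 2 ≤ N) (l : Fin N → ℤ)
    (hl : ∀ i j : Fin N, i ≤ j → l j ≤ l i) :
    (alphaOf N hN l hl).len ≤ (N + 1) / 2 - 1 :=
  len_le fun i hi => dif_neg (by omega)

lemma betaOf_len_le (N : ℕ) (hN : 2 ≤ N) (l : Fin N → ℤ)
    (hl : ∀ i j : Fin N, i ≤ j → l j ≤ l i) :
    (betaOf N hN l hl).len ≤ N - (N + 1) / 2 :=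
  len_le fun j hj => dif_neg (by omega)

lemma lamN_antitone (N : ℕ) (hN : 2 ≤ N) (α β : IntPartition) (n : ℤ)
    (hα : α.len ≤ (N + 1) / 2 - 1) (hβ : β.len ≤ N - (N + 1) / 2) :
    ∀ i j : Fin N, i ≤ j → lamN N α β n j ≤ lamN N α β n i := by
  intro i j hij
  rw [lamN_eq N hN α β n hα hβ i, lamN_eq N hN α β n hα hβ j]
  have h1 : α.part (j : ℕ) ≤ α.part (i : ℕ) := α.antitone' _ _ hij
  have h2 : β.part (N - 1 - (i : ℕ)) ≤ β.part (N - 1 - (j : ℕ)) := by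
    apply β.antitone'
    have : (i : ℕ) ≤ (j : ℕ) := hij
    omega
  omega

/-- The coupling bijection. -/
noncomputable def coupEquiv (N : ℕ) (hN : 2 ≤ N) :
    {x : IntPartition × IntPartition × ℤ //
        x.1.len ≤ (N + 1) / 2 - 1 ∧ x.2.1.len ≤ N - (N + 1) / 2}
      ≃ {l : Fin N → ℤ // ∀ i j : Fin N, i ≤ j → l j ≤ l i} where
  toFun x := ⟨lamN N x.1.1 x.1.2.1 x.1.2.2,
    lamN_antitone N hN x.1.1 x.1.2.1 x.1.2.2 x.2.1 x.2.2⟩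
  invFun l := ⟨(alphaOf N hN l.1 l.2, betaOf N hN l.1 l.2, l.1 ⟨(N + 1) / 2 - 1, by omega⟩),
    alphaOf_len_le N hN l.1 l.2, betaOf_len_le N hN l.1 l.2⟩
  left_inv := by
    rintro ⟨⟨α, β, n⟩, hα, hβ⟩
    replace hα : α.len ≤ (N + 1) / 2 - 1 := hα
    replace hβ : β.len ≤ N - (N + 1) / 2 := hβ
    have hl := lamN_antitone N hN α β n hα hβ
    have hmid : lamN N α β n ⟨(N + 1) / 2 - 1, by omega⟩ = n := by
      rw [lamN_eq' N hN α β n hα hβ ((N + 1) / 2 - 1) (by omega)]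
      rw [part_eq_zero (show α.len ≤ (N + 1) / 2 - 1 from hα)]
      rw [part_eq_zero (show β.len ≤ N - 1 - ((N + 1) / 2 - 1) by omega)]
      push_cast; ring
    apply Subtype.ext
    refine Prod.ext ?_ (Prod.ext ?_ ?_)
    · -- α component
      apply ptext
      funext i
      show (alphaOf N hN (lamN N α β n) hl).part i = α.part i
      rw [alphaOf_part]
      by_cases hi : i < (N + 1) / 2 - 1
      · rw [dif_pos hi, hmid]
        rw [lamN_eq' N hN α β n hα hβ i (by omega)]
        rw [part_eq_zero (show β.len ≤ N - 1 - i by omega)]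
        omega
      · rw [dif_neg hi, part_eq_zero (show α.len ≤ i by omega)]
    · -- β component
      apply ptext
      funext j
      show (betaOf N hN (lamN N α β n) hl).part j = β.part j
      rw [betaOf_part]
      by_cases hj : j < N - (N + 1) / 2
      · rw [dif_pos hj, hmid]
        rw [lamN_eq' N hN α β n hα hβ (N - 1 - j) (by omega)]
        rw [part_eq_zero (show α.len ≤ N - 1 - j by omega)]
        rw [show N - 1 - (N - 1 - j) = j by omega]
        omega
      · rw [dif_neg hj, part_eq_zero (show β.len ≤ j by omega)]
    · -- n component
      exact hmid
  right_inv := by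
    rintro ⟨l, hl⟩
    apply Subtype.ext
    funext i
    rcases i with ⟨k, hk⟩
    show lamN N (alphaOf N hN l hl) (betaOf N hN l hl) (l ⟨(N + 1) / 2 - 1, by omega⟩) ⟨k, hk⟩
      = l ⟨k, hk⟩
    rw [lamN_eq' N hN _ _ _ (alphaOf_len_le N hN l hl) (betaOf_len_le N hN l hl) k hk]
    rw [alphaOf_part, betaOf_part]
    by_cases h1 : k < (N + 1) / 2 - 1
    · rw [dif_pos h1, dif_neg (by omega : ¬ (N - 1 - k < N - (N + 1) / 2))]
      have hle : l ⟨(N + 1) / 2 - 1, by omega⟩ ≤ l ⟨k, by omega⟩ :=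
        hl ⟨k, by omega⟩ ⟨(N + 1) / 2 - 1, by omega⟩ (Fin.mk_le_mk.mpr (by omega))
      omega
    · by_cases h2 : k < (N + 1) / 2
      · have hk' : k = (N + 1) / 2 - 1 := by omega
        rw [dif_neg h1, dif_neg (by omega : ¬ (N - 1 - k < N - (N + 1) / 2))]
        subst hk'
        omega
      · rw [dif_neg h1, dif_pos (show N - 1 - k < N - (N + 1) / 2 by omega)]
        have hEq : l ⟨N - 1 - (N - 1 - k), by omega⟩ = l ⟨k, hk⟩ :=
          congrArg l (Fin.ext (show N - 1 - (N - 1 - k) = k by omega))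
        have hle : l ⟨k, hk⟩ ≤ l ⟨(N + 1) / 2 - 1, by omega⟩ :=
          hl ⟨(N + 1) / 2 - 1, by omega⟩ ⟨k, hk⟩ (Fin.mk_le_mk.mpr (by omega))
        omega

/-! ### The main theorem -/

/-- For `N ≥ 2`, `t > 0` and `q = e^{−t/2}`, and every `F` with values in `[0,∞]`:
`Σ_λ F(λ) e^{−(t/2)c₂(λ)} = Σ_{(α,β,n)} F(λ_N(α,β,n)) q^{|α|+|β|+n²}
q^{(2/N)(K(α)+K(β)+n(|α|−|β|))}`, where the left sum is over all nonincreasing `λ ∈ ℤ^N` and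
the right sum is over triples `(α,β,n)` with `ℓ(α) ≤ ⌊(N+1)/2⌋ − 1`,
`ℓ(β) ≤ N − ⌊(N+1)/2⌋`, `n ∈ ℤ`. -/
theorem gaussian_measure_coupling (N : ℕ) (hN : 2 ≤ N) (t : ℝ) (ht : 0 < t)
    (F : (Fin N → ℤ) → ENNReal) :
    ∑' l : {l : Fin N → ℤ // ∀ i j : Fin N, i ≤ j → l j ≤ l i},
        F l.1 * ENNReal.ofReal (Real.exp (-(t / 2) * (casimir N l.1 : ℝ)))
      = ∑' x : {x : IntPartition × IntPartition × ℤ //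
            x.1.len ≤ (N + 1) / 2 - 1 ∧ x.2.1.len ≤ N - (N + 1) / 2},
          F (lamN N x.1.1 x.1.2.1 x.1.2.2) *
            ENNReal.ofReal (Real.exp (-(t / 2)) ^
              (((x.1.1.size : ℝ) + (x.1.2.1.size : ℝ)) + (x.1.2.2 : ℝ) ^ 2)) *
            ENNReal.ofReal (Real.exp (-(t / 2)) ^
              ((2 / (N : ℝ)) * (((x.1.1.content : ℝ) + (x.1.2.1.content : ℝ)) +
                (x.1.2.2 : ℝ) * ((x.1.1.size : ℝ) - (x.1.2.1.size : ℝ))))) := by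
  rw [← Equiv.tsum_eq (coupEquiv N hN)
    (fun l => F l.1 * ENNReal.ofReal (Real.exp (-(t / 2) * (casimir N l.1 : ℝ))))]
  refine tsum_congr fun x => ?_
  obtain ⟨⟨α, β, n⟩, hα, hβ⟩ := x
  replace hα : α.len ≤ (N + 1) / 2 - 1 := hα
  replace hβ : β.len ≤ N - (N + 1) / 2 := hβ
  show F (lamN N α β n) * ENNReal.ofReal (Real.exp (-(t / 2) * (casimir N (lamN N α β n) : ℝ)))
    = F (lamN N α β n) *
        ENNReal.ofReal (Real.exp (-(t / 2)) ^ (((α.size : ℝ) + (β.size : ℝ)) + (n : ℝ) ^ 2)) *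
        ENNReal.ofReal (Real.exp (-(t / 2)) ^
          ((2 / (N : ℝ)) * (((α.content : ℝ) + (β.content : ℝ)) +
            (n : ℝ) * ((α.size : ℝ) - (β.size : ℝ)))))
  set E1 : ℝ := ((α.size : ℝ) + (β.size : ℝ)) + (n : ℝ) ^ 2 with hE1
  set E2 : ℝ := (2 / (N : ℝ)) * (((α.content : ℝ) + (β.content : ℝ)) +
    (n : ℝ) * ((α.size : ℝ) - (β.size : ℝ))) with hE2
  have hcas : ((casimir N (lamN N α β n) : ℚ) : ℝ) = E1 + E2 := by
    have h := casimir_lamN N hN α β n hα hβ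
    rw [h, hE1, hE2]
    push_cast
    ring
  have hq : (0:ℝ) < Real.exp (-(t / 2)) := Real.exp_pos _
  have hpow : ∀ E : ℝ, Real.exp (-(t / 2)) ^ E = Real.exp (-(t / 2) * E) := by
    intro E
    rw [Real.rpow_def_of_pos hq, Real.log_exp]
  rw [hpow E1, hpow E2, hcas]
  rw [mul_assoc, ← ENNReal.ofReal_mul (le_of_lt (Real.exp_pos _)), ← Real.exp_add]
  congr 2
  ring
end
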